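/- Consider the iteration z(k+1) = A^k z(k) - a_k d(k) in ℝ^N, where each A^k is row-stochastic with backward products Φ(k,s) → 1 q(s)^⊤ geometrically fast, the sequence d(k) is bounded, and a_k → 0. Then the disagreement z(k) - 1 q(k)^⊤ z(k) converges to 0 as k → ∞. -/

import Mathlib

/-!
The disagreement `e k = z k - 1 q(k)ᵀ z k` obeys the linear recursion
`e (k+1) = A k e k - a k (d k - 1 q(k+1)ᵀ d k)`, and every vector fed into it is annihilated
by the corresponding `q`. On such vectors `Φ(k,s)` acts as `Φ(k,s) - 1 q(s)ᵀ`, so it contracts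
geometrically. Unrolling the recursion bounds `‖e (k+1)‖` by a geometric term plus the
convolution of `ρ ^ j` with a null sequence, which tends to `0` by dominated convergence.
-/

open Filter Matrix

/-- Backward product `Φ(k,s) = A^k A^(k-1) ⋯ A^s` (identity if `k+1 ≤ s`). -/
def backProd {N : ℕ} (A : ℕ → Matrix (Fin N) (Fin N) ℝ) (k s : ℕ) :
    Matrix (Fin N) (Fin N) ℝ :=
  ((List.range (k + 1 - s)).map (fun i => A (k - i))).prod

open Finset Topology

def disagreement {n : Type*} [Fintype n] (p x : n → ℝ) : n → ℝ :=
  x - fun _ => p ⬝ᵥ x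

section Disagreement

variable {n : Type*} [Fintype n]

lemma dotProduct_disagreement {p : n → ℝ} (hp : ∑ i, p i = 1) (x : n → ℝ) :
    p ⬝ᵥ disagreement p x = 0 := by
  rw [disagreement, dotProduct_sub, sub_eq_zero]
  simp [dotProduct, ← sum_mul, hp]

lemma disagreement_mulVec_sub {A : Matrix n n ℝ} {p p' : n → ℝ} (hA : ∀ i, ∑ j, A i j = 1)
    (hp : p = p' ᵥ* A) (c : ℝ) (x y : n → ℝ) :
    disagreement p' (A *ᵥ x - c • y) = A *ᵥ disagreement p x - c • disagreement p' y := by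
  have hconst : A *ᵥ (fun _ => p ⬝ᵥ x) = fun _ => p ⬝ᵥ x := by
    ext i
    simp [mulVec, dotProduct, ← sum_mul, hA]
  rw [disagreement, disagreement, disagreement, mulVec_sub, hconst, dotProduct_sub,
    dotProduct_mulVec, ← hp, dotProduct_smul]
  ext i
  simp only [Pi.sub_apply, Pi.smul_apply, smul_eq_mul]
  ring

lemma abs_dotProduct_le {p : n → ℝ} (hp0 : ∀ i, 0 ≤ p i) (hp1 : ∑ i, p i = 1) (y : n → ℝ) :
    |p ⬝ᵥ y| ≤ ‖y‖ :=
  calc |p ⬝ᵥ y| ≤ ∑ i, |p i * y i| := abs_sum_le_sum_abs _ _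
    _ ≤ ∑ i, p i * ‖y‖ := sum_le_sum fun i _ => by
        rw [abs_mul, abs_of_nonneg (hp0 i)]
        exact mul_le_mul_of_nonneg_left (norm_le_pi_norm y i) (hp0 i)
    _ = ‖y‖ := by rw [← sum_mul, hp1, one_mul]

lemma norm_disagreement_le {p : n → ℝ} (hp0 : ∀ i, 0 ≤ p i) (hp1 : ∑ i, p i = 1)
    (y : n → ℝ) : ‖disagreement p y‖ ≤ 2 * ‖y‖ := by
  refine (pi_norm_le_iff_of_nonneg (by positivity)).mpr fun i => ?_
  calc ‖y i - p ⬝ᵥ y‖ ≤ ‖y i‖ + |p ⬝ᵥ y| := norm_sub_le _ _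
    _ ≤ ‖y‖ + ‖y‖ := add_le_add (norm_le_pi_norm y i) (abs_dotProduct_le hp0 hp1 y)
    _ = 2 * ‖y‖ := by ring

lemma norm_mulVec_le_of_abs_sub_le {M : Matrix n n ℝ} {p v : n → ℝ}
    {ε : ℝ} (hM : ∀ i j, |M i j - p j| ≤ ε) (hv : p ⬝ᵥ v = 0) :
    ‖M *ᵥ v‖ ≤ Fintype.card n * ε * ‖v‖ := by
  have hrow (i : n) : ‖(M *ᵥ v) i‖ ≤ Fintype.card n * ε * ‖v‖ := by
    have hMv : (M *ᵥ v) i = ∑ j, (M i j - p j) * v j := by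
      rw [mulVec, dotProduct, ← sub_zero (∑ j, M i j * v j), ← hv, dotProduct, ← sum_sub_distrib]
      simp only [sub_mul]
    calc ‖(M *ᵥ v) i‖ ≤ ∑ j, |(M i j - p j) * v j| := hMv ▸ abs_sum_le_sum_abs _ _
      _ ≤ ∑ _j : n, ε * ‖v‖ := sum_le_sum fun j _ => by
          rw [abs_mul]
          exact mul_le_mul (hM i j) (norm_le_pi_norm v j) (abs_nonneg _)
            ((abs_nonneg _).trans (hM i j))
      _ = Fintype.card n * ε * ‖v‖ := by simp [mul_assoc]
  rcases isEmpty_or_nonempty n with hn | hn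
  · simp [Subsingleton.elim (M *ᵥ v) 0]
  · exact (pi_norm_le_iff_of_nonempty _).mpr hrow

end Disagreement

theorem tendsto_sum_range_mul_sub_of_summable {r b : ℕ → ℝ} (hr : Summable r)
    (hb : Tendsto b atTop (𝓝 0)) :
    Tendsto (fun k => ∑ t ∈ range (k + 1), r (k - t) * b t) atTop (𝓝 0) := by
  obtain ⟨B, hB⟩ := hb.abs.bddAbove_range
  have hsum (k : ℕ) : ∑ t ∈ range (k + 1), r (k - t) * b t
      = ∑' j, if j ≤ k then r j * b (k - j) else 0 := by
    rw [← sum_range_reflect, tsum_eq_sum (s := range (k + 1)) fun j hj => by simp_all]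
    refine sum_congr rfl fun j hj => ?_
    rw [mem_range] at hj
    simp [show j ≤ k by omega, show k - (k - j) = j by omega]
  have hterm (j : ℕ) : Tendsto (fun k => if j ≤ k then r j * b (k - j) else 0) atTop (𝓝 0) := by
    refine (tendsto_congr' (eventually_ge_atTop j |>.mono fun k hk => (if_pos hk).symm)).mp ?_
    simpa using (hb.comp (tendsto_sub_atTop_nat j)).const_mul (r j)
  have hbound (k j : ℕ) : ‖if j ≤ k then r j * b (k - j) else 0‖ ≤ |r j| * B := by
    have hB0 : 0 ≤ B := (abs_nonneg _).trans (hB ⟨0, rfl⟩)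
    split_ifs
    · rw [Real.norm_eq_abs, abs_mul]
      exact mul_le_mul_of_nonneg_left (hB ⟨k - j, rfl⟩) (abs_nonneg _)
    · simpa using mul_nonneg (abs_nonneg (r j)) hB0
  simp_rw [hsum]
  simpa using tendsto_tsum_of_dominated_convergence
    ((summable_abs_iff.mpr hr).mul_right B) hterm (Eventually.of_forall hbound)

section BackwardProduct

variable {N : ℕ} (A : ℕ → Matrix (Fin N) (Fin N) ℝ)

lemma backProd_self (k : ℕ) : backProd A k k = A k := by
  simp [backProd, show k + 1 - k = 1 by omega]

lemma backProd_succ_self (k : ℕ) : backProd A k (k + 1) = 1 := by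
  simp [backProd]

lemma backProd_succ_left {k s : ℕ} (hs : s ≤ k + 1) :
    backProd A (k + 1) s = A (k + 1) * backProd A k s := by
  rw [backProd, backProd, show k + 1 + 1 - s = k + 1 - s + 1 by omega, List.range_succ_eq_map]
  simp only [List.map_cons, List.map_map, List.prod_cons, Nat.sub_zero]
  congr 2
  exact List.map_congr_left fun i _ => by simp

lemma succ_eq_backProd_mulVec_add_sum {x u : ℕ → Fin N → ℝ}
    (hx : ∀ k, x (k + 1) = A k *ᵥ x k + u k) (k : ℕ) :
    x (k + 1) = backProd A k 0 *ᵥ x 0 + ∑ t ∈ range (k + 1), backProd A k (t + 1) *ᵥ u t := by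
  induction k with
  | zero => simp [hx, backProd_self, backProd_succ_self]
  | succ k ih =>
    rw [hx, ih, mulVec_add, mulVec_mulVec, ← backProd_succ_left A (Nat.zero_le _), mulVec_sum,
      sum_range_succ _ (k + 1), backProd_succ_self, one_mulVec, add_assoc]
    congr 2
    refine sum_congr rfl fun t ht => ?_
    rw [mulVec_mulVec, ← backProd_succ_left A (by simp at ht; omega)]

end BackwardProduct

section Consensus

variable {N : ℕ} {A : ℕ → Matrix (Fin N) (Fin N) ℝ} {q : ℕ → Fin N → ℝ} {C ρ : ℝ}

-- The `1` in the constant covers `s = k + 1`, where `backProd A k s = 1`.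
lemma norm_backProd_mulVec_le (hρ : 0 < ρ)
    (hgeo : ∀ k s : ℕ, s ≤ k → ∀ i j, |backProd A k s i j - q s j| ≤ C * ρ ^ (k - s))
    {k s : ℕ} (hs : s ≤ k + 1) {v : Fin N → ℝ} (hv : q s ⬝ᵥ v = 0) :
    ‖backProd A k s *ᵥ v‖ ≤ max 1 (N * C / ρ) * ρ ^ (k + 1 - s) * ‖v‖ := by
  rcases hs.eq_or_lt with rfl | hs
  · simpa [backProd_succ_self] using le_mul_of_one_le_left (norm_nonneg v) (le_max_left _ _)
  · have hs : s ≤ k := Nat.lt_succ_iff.mp hs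
    calc ‖backProd A k s *ᵥ v‖ ≤ N * (C * ρ ^ (k - s)) * ‖v‖ := by
          simpa using norm_mulVec_le_of_abs_sub_le (hgeo k s hs) hv
      _ = N * C / ρ * ρ ^ (k + 1 - s) * ‖v‖ := by
          rw [show k + 1 - s = k - s + 1 by omega, pow_succ]
          field_simp
      _ ≤ max 1 (N * C / ρ) * ρ ^ (k + 1 - s) * ‖v‖ := by gcongr; exact le_max_right _ _

theorem tendsto_zero_of_succ_eq_mulVec_add (hρ : ρ ∈ Set.Ioo 0 1)
    (hgeo : ∀ k s : ℕ, s ≤ k → ∀ i j, |backProd A k s i j - q s j| ≤ C * ρ ^ (k - s))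
    {x u : ℕ → Fin N → ℝ} (hx0 : q 0 ⬝ᵥ x 0 = 0) (hx : ∀ k, x (k + 1) = A k *ᵥ x k + u k)
    (hu : ∀ k, q (k + 1) ⬝ᵥ u k = 0) (hu0 : Tendsto u atTop (𝓝 0)) :
    Tendsto x atTop (𝓝 0) := by
  set K := max 1 (N * C / ρ)
  have hbound (k : ℕ) : ‖x (k + 1)‖
      ≤ K * ‖x 0‖ * ρ ^ (k + 1) + ∑ t ∈ range (k + 1), ρ ^ (k - t) * (K * ‖u t‖) := by
    rw [succ_eq_backProd_mulVec_add_sum A hx k]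
    refine (norm_add_le _ _).trans (add_le_add ?_ ((norm_sum_le _ _).trans ?_))
    · simpa [mul_right_comm] using norm_backProd_mulVec_le hρ.1 hgeo (Nat.zero_le _) hx0
    · refine sum_le_sum fun t ht => ?_
      have := norm_backProd_mulVec_le hρ.1 hgeo (k := k) (s := t + 1) (by simp at ht; omega) (hu t)
      rwa [show k + 1 - (t + 1) = k - t by omega, mul_comm K, mul_assoc] at this
  have hgeom : Tendsto (fun k => K * ‖x 0‖ * ρ ^ (k + 1)) atTop (𝓝 0) := by
    simpa using ((tendsto_pow_atTop_nhds_zero_of_lt_one hρ.1.le hρ.2).comp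
      (tendsto_add_atTop_nat 1)).const_mul (K * ‖x 0‖)
  have hnoise := tendsto_sum_range_mul_sub_of_summable
    (summable_geometric_of_lt_one hρ.1.le hρ.2) (by simpa using hu0.norm.const_mul K)
  rw [← tendsto_add_atTop_iff_nat 1]
  exact squeeze_zero_norm hbound (by simpa using hgeom.add hnoise)

end Consensus

theorem disagreement_tendsto_zero_general
    (N : ℕ) (A : ℕ → Matrix (Fin N) (Fin N) ℝ)
    (hrow : ∀ k n, ∑ l, A k n l = 1)
    (q : ℕ → Fin N → ℝ)
    (hq : ∀ s, (∀ n, 0 ≤ q s n) ∧ ∑ n, q s n = 1)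
    (hqrec : ∀ s j, q s j = ∑ i, q (s + 1) i * A s i j)
    (C ρ : ℝ) (hρ : ρ ∈ Set.Ioo (0:ℝ) 1)
    (hgeo : ∀ k s : ℕ, s ≤ k → ∀ i j,
      |backProd A k s i j - q s j| ≤ C * ρ ^ (k - s))
    (a : ℕ → ℝ) (ha0 : Tendsto a atTop (nhds 0))
    (d : ℕ → Fin N → ℝ) (D : ℝ) (hd : ∀ k i, |d k i| ≤ D)
    (z : ℕ → Fin N → ℝ)
    (hz : ∀ k, z (k + 1) = A k *ᵥ z k - a k • d k) :
    Tendsto (fun k => z k - (fun _ : Fin N => ∑ i, q k i * z k i))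
      atTop (nhds 0) := by
  change Tendsto (fun k => disagreement (q k) (z k)) atTop (𝓝 0)
  have hrec (k : ℕ) : disagreement (q (k + 1)) (z (k + 1))
      = A k *ᵥ disagreement (q k) (z k) + -(a k • disagreement (q (k + 1)) (d k)) := by
    rw [hz, disagreement_mulVec_sub (hrow k) (funext (hqrec k)), sub_eq_add_neg]
  have hnoise_bdd (k : ℕ) : ‖disagreement (q (k + 1)) (d k)‖ ≤ 2 * |D| :=
    (norm_disagreement_le (hq (k + 1)).1 (hq (k + 1)).2 _).trans <| by
      gcongr
      exact (pi_norm_le_iff_of_nonneg (abs_nonneg D)).mpr fun i => (hd k i).trans (le_abs_self D)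
  have hnoise : Tendsto (fun k => -(a k • disagreement (q (k + 1)) (d k))) atTop (𝓝 0) := by
    simpa using (ha0.zero_smul_isBoundedUnder_le ⟨2 * |D|, eventually_map.mpr
      (Eventually.of_forall hnoise_bdd)⟩).neg
  refine tendsto_zero_of_succ_eq_mulVec_add hρ hgeo (dotProduct_disagreement (hq 0).2 _) hrec
    (fun k => ?_) hnoise
  rw [dotProduct_neg, dotProduct_smul, dotProduct_disagreement (hq (k + 1)).2, smul_zero, neg_zero]

theorem disagreement_tendsto_zero
    (N : ℕ) (hN : 0 < N) (A : ℕ → Matrix (Fin N) (Fin N) ℝ)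
    (hnonneg : ∀ k n l, 0 ≤ A k n l)
    (hrow : ∀ k n, ∑ l, A k n l = 1)
    (q : ℕ → Fin N → ℝ)
    (hq : ∀ s, (∀ n, 0 ≤ q s n) ∧ ∑ n, q s n = 1)
    (hqrec : ∀ s j, q s j = ∑ i, q (s + 1) i * A s i j)
    (C ρ : ℝ) (hC : 0 < C) (hρ : ρ ∈ Set.Ioo (0:ℝ) 1)
    (hgeo : ∀ k s : ℕ, s ≤ k → ∀ i j,
      |backProd A k s i j - q s j| ≤ C * ρ ^ (k - s))
    (a : ℕ → ℝ) (ha : ∀ k, 0 < a k) (ha0 : Tendsto a atTop (nhds 0))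
    (d : ℕ → Fin N → ℝ) (D : ℝ) (hd : ∀ k i, |d k i| ≤ D)
    (z : ℕ → Fin N → ℝ)
    (hz : ∀ k, z (k + 1) = A k *ᵥ z k - a k • d k) :
    Tendsto (fun k => z k - (fun _ : Fin N => ∑ i, q k i * z k i))
      atTop (nhds 0) :=
  disagreement_tendsto_zero_general N A hrow q hq hqrec C ρ hρ hgeo a ha0 d D hd z hz
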